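/- arXiv:1811.04287 — 2 statements merged into one kernel-verified Lean document; each statement's English description precedes it below -/
import Mathlib

section
/- Let H be a graph, U ⊆ V(H), and t a positive integer. If the (U, t)-blow-up of H is T-free for a tree T with |T| = t, then the (U, s)-blow-up of H is T-free for every positive integer s. In particular, any copy of T in a (U, s)-blow-up uses vertices from at most t of the s copies of H. -/
def IsCopy {α β : Type*} (H : SimpleGraph α) (G : SimpleGraph β) (f : α ↪ β) : Prop :=
  ∀ a b, H.Adj a b → G.Adj (f a) (f b)

def HasCopy {α β : Type*} (H : SimpleGraph α) (G : SimpleGraph β) : Prop :=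
  ∃ f : α ↪ β, IsCopy H G f

def TFree {α β : Type*} (G : SimpleGraph β) (T : SimpleGraph α) : Prop := ¬ HasCopy T G

noncomputable def copyCount {α β : Type*} (H : SimpleGraph α) (G : SimpleGraph β) : ℕ :=
  Nat.card {f : α ↪ β // IsCopy H G f}

noncomputable def exNum {α γ : Type*} (n : ℕ) (H : SimpleGraph α) (T : SimpleGraph γ) : ℕ :=
  sSup {m | ∃ G : SimpleGraph (Fin n), TFree G T ∧ copyCount H G = m}

def bproj {α : Type*} (U : Set α) (t : ℕ) : (↥U ⊕ ↥(Uᶜ) × Fin t) → α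
  | Sum.inl u => u.1
  | Sum.inr p => p.1.1

def sameCopy {α : Type*} (U : Set α) (t : ℕ) :
    (↥U ⊕ ↥(Uᶜ) × Fin t) → (↥U ⊕ ↥(Uᶜ) × Fin t) → Prop
  | Sum.inr p, Sum.inr q => p.2 = q.2
  | _, _ => True

/-- The `(U, t)`-blow-up of `H`: `t` copies of `H` with the vertices of `U` identified. -/
def blowup {α : Type*} (H : SimpleGraph α) (U : Set α) (t : ℕ) :
    SimpleGraph (↥U ⊕ ↥(Uᶜ) × Fin t) where
  Adj x y := H.Adj (bproj U t x) (bproj U t y) ∧ sameCopy U t x y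
  symm := by
    constructor
    rintro x y ⟨h1, h2⟩
    refine ⟨h1.symm, ?_⟩
    cases x <;> cases y <;> simp_all [sameCopy, eq_comm]
  loopless := by
    constructor
    rintro x ⟨h1, _⟩
    exact (H.ne_of_adj h1) rfl

/-!
A copy of `T` in the `(U, s)`-blow-up meets at most `|T| = t` of the `s` copies of `H`, since
each vertex of `T` lies in at most one of them. Relabelling the copies of `H` by any map
`Fin s → Fin t` is a homomorphism of blow-ups, and one that is injective on the copies met
by the embedding of `T` keeps it injective, hence carries it to a copy of `T` in the
`(U, t)`-blow-up.
-/

open Function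

theorem IsCopy.hasCopy_of_hom {α β β' : Type*} {T : SimpleGraph α} {G : SimpleGraph β}
    {G' : SimpleGraph β'} {f : α ↪ β} (hf : IsCopy T G f) (φ : G →g G')
    (hφ : Injective (φ ∘ f)) : HasCopy T G' :=
  ⟨⟨φ ∘ f, hφ⟩, fun a b hab => φ.map_rel (hf a b hab)⟩

namespace blowup

variable {α γ : Type*} {H : SimpleGraph α} {U : Set α} {s t : ℕ}

/-- Vertices of `U` are shared by all copies of `H`, so they get no index. -/
def copyIndex : (↥U ⊕ ↥(Uᶜ) × Fin s) → Option (Fin s) :=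
  Sum.elim (fun _ => none) (fun p => some p.2)

def relabel (H : SimpleGraph α) (U : Set α) (σ : Fin s → Fin t) :
    blowup H U s →g blowup H U t where
  toFun := Sum.map id (Prod.map id σ)
  map_rel' := by
    rintro (u | ⟨w, i⟩) (v | ⟨w', j⟩) ⟨hadj, hsame⟩ <;>
      exact ⟨hadj, by simp_all [sameCopy]⟩

theorem relabel_apply (σ : Fin s → Fin t) (v : ↥U ⊕ ↥(Uᶜ) × Fin s) :
    relabel H U σ v = Sum.map id (Prod.map id σ) v :=
  rfl

theorem injOn_relabel {σ : Fin s → Fin t} {S : Set (Fin s)} (hσ : Set.InjOn σ S) :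
    Set.InjOn (relabel H U σ) {v | ∀ i, copyIndex v = some i → i ∈ S} := by
  rintro (u | ⟨w, i⟩) hv (u' | ⟨w', i'⟩) hv' h <;>
    simp only [relabel_apply, copyIndex, Sum.map_inl, Sum.map_inr, Prod.map_apply, id_eq,
      Sum.inl.injEq, Sum.inr.injEq, Prod.mk.injEq, reduceCtorEq, Set.mem_ofPred_eq, Sum.elim_inr,
      Option.some.injEq, forall_eq'] at h hv hv' ⊢
  · exact h
  · exact ⟨h.1, hσ hv hv' h.2⟩

variable [Fintype γ]

def usedCopies (f : γ → (↥U ⊕ ↥(Uᶜ) × Fin s)) : Finset (Fin s) :=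
  (Finset.univ.image (copyIndex ∘ f)).eraseNone

theorem mem_usedCopies {f : γ → (↥U ⊕ ↥(Uᶜ) × Fin s)} {i : Fin s} :
    i ∈ usedCopies f ↔ ∃ x, copyIndex (f x) = some i := by
  simp [usedCopies]

theorem mem_usedCopies_of_eq {f : γ → (↥U ⊕ ↥(Uᶜ) × Fin s)} {x : γ} {w : ↥(Uᶜ)} {i : Fin s}
    (hx : f x = Sum.inr (w, i)) : i ∈ usedCopies f :=
  mem_usedCopies.2 ⟨x, by rw [hx]; rfl⟩

theorem card_usedCopies_le (f : γ → (↥U ⊕ ↥(Uᶜ) × Fin s)) :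
    (usedCopies f).card ≤ Fintype.card γ :=
  (Finset.card_eraseNone_le _).trans Finset.card_image_le

theorem hasCopy_of_card_le {T : SimpleGraph γ} {f : γ ↪ (↥U ⊕ ↥(Uᶜ) × Fin s)}
    (hf : IsCopy T (blowup H U s) f) (hcard : Fintype.card γ ≤ t) (ht : 0 < t) :
    HasCopy T (blowup H U t) := by
  have : Nonempty (Fin t) := Fin.pos_iff_nonempty.1 ht
  obtain ⟨σ, hσ⟩ : ∃ σ : Fin s → Fin t, Set.InjOn σ (usedCopies f) := by
    obtain ⟨e⟩ := Embedding.nonempty_of_card_le (α := usedCopies f) (β := Fin t)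
      (by simpa using (card_usedCopies_le f).trans hcard)
    exact Set.exists_injOn_iff_injective.2 ⟨e, e.injective⟩
  refine hf.hasCopy_of_hom (relabel H U σ) ?_
  refine ((injOn_relabel hσ).injective_iff _ ?_).2 f.injective
  rintro _ ⟨x, rfl⟩ i hi
  exact mem_usedCopies.2 ⟨x, hi⟩

end blowup

open blowup in
theorem stmt_1_general {α γ : Type*} [Fintype γ] (H : SimpleGraph α) (U : Set α) (t : ℕ)
    (ht : 0 < t) (T : SimpleGraph γ) (hcard : Fintype.card γ = t)
    (hfree : TFree (blowup H U t) T) :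
    ∀ s : ℕ, 0 < s →
      TFree (blowup H U s) T ∧
      ∀ f : γ ↪ (↥U ⊕ ↥(Uᶜ) × Fin s), IsCopy T (blowup H U s) f →
        ∃ I : Finset (Fin s), I.card ≤ t ∧
          ∀ (x : γ) (w : ↥(Uᶜ)) (i : Fin s), f x = Sum.inr (w, i) → i ∈ I := by
  intro s _
  refine ⟨?_, fun f _ => ⟨usedCopies f, hcard ▸ card_usedCopies_le f,
    fun _ _ _ hx => mem_usedCopies_of_eq hx⟩⟩
  rintro ⟨f, hf⟩
  exact hfree (hasCopy_of_card_le hf hcard.le ht)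

/-- If the `(U,t)`-blow-up of `H` is `T`-free for a tree `T` on `t` vertices, then the
`(U,s)`-blow-up is `T`-free for every `s ≥ 1`; in particular any copy of `T` in a
`(U,s)`-blow-up uses vertices from at most `t` of the `s` copies of `H`. -/
theorem stmt_1 {α γ : Type*} [Fintype γ] (H : SimpleGraph α) (U : Set α) (t : ℕ)
    (ht : 0 < t) (T : SimpleGraph γ) (hTree : T.IsTree) (hcard : Fintype.card γ = t)
    (hfree : TFree (blowup H U t) T) :
    ∀ s : ℕ, 0 < s →
      TFree (blowup H U s) T ∧
      ∀ f : γ ↪ (↥U ⊕ ↥(Uᶜ) × Fin s), IsCopy T (blowup H U s) f →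
        ∃ I : Finset (Fin s), I.card ≤ t ∧
          ∀ (x : γ) (w : ↥(Uᶜ)) (i : Fin s), f x = Sum.inr (w, i) → i ∈ I :=
  stmt_1_general H U t ht T hcard hfree
end

section
/- Let D be a finite directed graph, P its partition into strongly connected components, and let A ⊆ V(D) satisfy: every vertex is reachable from A, |A| is minimal among such sets, and among these A maximizes Σ_{u∈A}(number of vertices reachable from u). Let W be the union of the parts of P containing a vertex of A, and U = V(D) \ W. Then there are no directed edges between distinct parts of P that are both contained in W, and there are no directed edges from U to W. -/
/-!
In a minimum-size set `A` from which every vertex is reachable, no element reaches another one: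
otherwise the reached element could be dropped from `A`. So if `a ∈ A` reaches `x`, there is an
edge `x → y`, and `y` reaches `b ∈ A`, then `a = b`, and `x`, `y` both lie in the strongly
connected component of `a`. Both claims are instances of this.
-/

open Relation

section

variable {V : Type*} {r : V → V → Prop} {A : Finset V}

theorem reachCover_erase [DecidableEq V] (hreach : ∀ v, ∃ a ∈ A, ReflTransGen r a v)
    {a b : V} (ha : a ∈ A) (hne : a ≠ b) (hab : ReflTransGen r a b) :
    ∀ v, ∃ c ∈ A.erase b, ReflTransGen r c v := by
  intro v
  obtain ⟨c, hc, hcv⟩ := hreach v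
  by_cases hcb : c = b
  · exact ⟨a, Finset.mem_erase.mpr ⟨hne, ha⟩, hab.trans (hcb ▸ hcv)⟩
  · exact ⟨c, Finset.mem_erase.mpr ⟨hcb, hc⟩, hcv⟩

theorem eq_of_reflTransGen_of_minimal_reachCover (hreach : ∀ v, ∃ a ∈ A, ReflTransGen r a v)
    (hmin : ∀ B : Finset V, (∀ v, ∃ a ∈ B, ReflTransGen r a v) → A.card ≤ B.card)
    {a b : V} (ha : a ∈ A) (hb : b ∈ A) (hab : ReflTransGen r a b) : a = b := by
  classical
  by_contra hne
  have hle := hmin _ (reachCover_erase hreach ha hne hab)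
  have hlt := Finset.card_erase_lt_of_mem hb
  omega

end

theorem stmt_6_general {V : Type*} (D : V → V → Prop) (A : Finset V)
    (hreach : ∀ v, ∃ a ∈ A, Relation.ReflTransGen D a v)
    (hmin : ∀ B : Finset V, (∀ v, ∃ a ∈ B, Relation.ReflTransGen D a v) → A.card ≤ B.card)
    (W : Set V)
    (hW : W = {v | ∃ a ∈ A, Relation.ReflTransGen D a v ∧ Relation.ReflTransGen D v a}) :
    (∀ x ∈ W, ∀ y ∈ W, D x y →
      Relation.ReflTransGen D x y ∧ Relation.ReflTransGen D y x) ∧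
    (∀ x, x ∉ W → ∀ y ∈ W, ¬ D x y) := by
  have through_edge : ∀ {a b x y}, a ∈ A → b ∈ A → ReflTransGen D a x → D x y →
      ReflTransGen D y b → a = b := fun ha hb hax hxy hyb =>
    eq_of_reflTransGen_of_minimal_reachCover hreach hmin ha hb
      ((hax.tail hxy).trans hyb)
  subst hW
  constructor
  · rintro x ⟨a, ha, hax, hxa⟩ y ⟨b, hb, hby, hyb⟩ hxy
    obtain rfl := through_edge ha hb hax hxy hyb
    exact ⟨.single hxy, hyb.trans hax⟩
  · rintro x hx y ⟨b, hb, -, hyb⟩ hxy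
    obtain ⟨a, ha, hax⟩ := hreach x
    obtain rfl := through_edge ha hb hax hxy hyb
    exact hx ⟨a, ha, hax, ReflTransGen.head hxy hyb⟩

/-- With `A` as in the previous statement, `W` the union of the strongly connected components
meeting `A`, and `U = V ∖ W`: there are no edges between distinct components inside `W`, and
no edges from `U` to `W`. -/
theorem stmt_6 {V : Type*} [Fintype V] (D : V → V → Prop) (A : Finset V)
    (hreach : ∀ v, ∃ a ∈ A, Relation.ReflTransGen D a v)
    (hmin : ∀ B : Finset V, (∀ v, ∃ a ∈ B, Relation.ReflTransGen D a v) → A.card ≤ B.card)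
    (hmax : ∀ B : Finset V, (∀ v, ∃ a ∈ B, Relation.ReflTransGen D a v) → B.card = A.card →
      ∑ u ∈ B, Set.ncard {v | Relation.ReflTransGen D u v} ≤
        ∑ u ∈ A, Set.ncard {v | Relation.ReflTransGen D u v})
    (W : Set V)
    (hW : W = {v | ∃ a ∈ A, Relation.ReflTransGen D a v ∧ Relation.ReflTransGen D v a}) :
    (∀ x ∈ W, ∀ y ∈ W, D x y →
      Relation.ReflTransGen D x y ∧ Relation.ReflTransGen D y x) ∧
    (∀ x, x ∉ W → ∀ y ∈ W, ¬ D x y) :=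
  stmt_6_general D A hreach hmin W hW
end
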